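/- Let f(x) = a₁x + a₂x² + ⋯ with a₁ ≠ 0 in a field, and let f^(n) be its n-fold composition with coefficients f_k^(n). Then for each k ≥ 2 and n ≥ 1, f_k^(n) − a_k a₁^{n−1} ∑_{i=0}^{n−1} a₁^{(k−1)i} is a polynomial (with integer coefficients) in a₁, a₂, …, a_{k−1} in which every monomial contains some a_j with 2 ≤ j ≤ k−1; in particular, if a₂ = a₃ = ⋯ = a_{k−1} = 0 then f_k^(n) = a_k a₁^{n−1} ∑_{i=0}^{n−1} a₁^{(k−1)i}. -/

import Mathlib

/-!
Write `f = a₁X + r` where, under the hypotheses, `r` has order at least `k`. Since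
`f^j - (a₁X)^j = (f - a₁X) · ∑ f^i (a₁X)^(j-1-i)` is divisible by `X^(k+j-1)`, for `j ≥ 2` the
`x^k`-coefficient of `f^j` is that of `(a₁X)^j`, namely `a₁^k` if `j = k` and `0` otherwise.
Hence in `F ∘ f` only `j = 1` and `j = k` contribute to the `x^k`-coefficient, giving the recursion
`f_k^(n+1) = a₁^n a_k + a₁^k f_k^(n)`, which is solved by the geometric sum.
-/

open PowerSeries Finset

/-- Composition of formal power series (meaningful when `g` has zero constant term):
the coefficient of `x^k` in `f(g(x))` is `∑_{j=0}^{k} f_j · [x^k](g^j)`. -/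
noncomputable def pscomp {R : Type*} [CommRing R] (f g : PowerSeries R) : PowerSeries R :=
  PowerSeries.mk fun k =>
    ∑ j ∈ Finset.range (k + 1), (PowerSeries.coeff j f) * (PowerSeries.coeff k (g ^ j))

/-- The `n`-fold composition `f^(n)`: `f^(1) = f`, `f^(n) = f^(n-1) ∘ f`. -/
noncomputable def psiter {R : Type*} [CommRing R] (f : PowerSeries R) : ℕ → PowerSeries R
  | 0 => PowerSeries.X
  | 1 => f
  | (n + 2) => pscomp (psiter f (n + 1)) f

theorem pow_mul_dvd_pow_sub_pow {α : Type*} [CommRing α] {x g h : α} (hg : x ∣ g) (hh : x ∣ h)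
    {k : ℕ} (hgh : x ^ k ∣ g - h) (j : ℕ) : x ^ (j - 1) * x ^ k ∣ g ^ j - h ^ j := by
  rw [← geom_sum₂_mul]
  refine mul_dvd_mul (dvd_sum fun i hi => ?_) hgh
  have hsplit : x ^ (j - 1) = x ^ i * x ^ (j - 1 - i) := by
    rw [← pow_add, Nat.add_sub_cancel' (by grind)]
  rw [hsplit]
  exact mul_dvd_mul (pow_dvd_pow_of_dvd hg i) (pow_dvd_pow_of_dvd hh _)

section

variable {R : Type*} [CommRing R]

theorem coeff_pscomp (f g : R⟦X⟧) (k : ℕ) :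
    coeff k (pscomp f g) = ∑ j ∈ range (k + 1), coeff j f * coeff k (g ^ j) := by
  simp [pscomp]

theorem pscomp_X {g : R⟦X⟧} (hg : constantCoeff g = 0) : pscomp X g = g := by
  ext k
  rcases k with _ | k
  · simp [coeff_pscomp, hg]
  · simp [coeff_pscomp, coeff_X]

theorem psiter_succ {f : R⟦X⟧} (hf : constantCoeff f = 0) (n : ℕ) :
    psiter f (n + 1) = pscomp (psiter f n) f := by
  rcases n with _ | n
  · exact (pscomp_X hf).symm
  · rfl

theorem coeff_one_pscomp (f g : R⟦X⟧) : coeff 1 (pscomp f g) = coeff 1 f * coeff 1 g := by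
  simp [coeff_pscomp, sum_range_succ]

theorem coeff_one_psiter (f : R⟦X⟧) : ∀ n, coeff 1 (psiter f n) = coeff 1 f ^ n
  | 0 => by simp [psiter]
  | 1 => by simp [psiter]
  | n + 2 => by rw [psiter, coeff_one_pscomp, coeff_one_psiter f (n + 1), ← pow_succ]

theorem coeff_pow_of_X_pow_dvd {g : R⟦X⟧} {k : ℕ} (hk : 1 ≤ k)
    (hg : X ^ k ∣ g - C (coeff 1 g) * X) {j : ℕ} (hj : 2 ≤ j) :
    coeff k (g ^ j) = if j = k then coeff 1 g ^ k else 0 := by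
  have hX : X ∣ C (coeff 1 g) * X := dvd_mul_left X _
  have hXg : X ∣ g := X_dvd_iff.mpr (by simpa using X_pow_dvd_iff.mp hg 0 (by omega))
  have hdvd := pow_mul_dvd_pow_sub_pow hXg hX hg j
  rw [← pow_add] at hdvd
  have hcoeff := X_pow_dvd_iff.mp hdvd k (by omega)
  rw [map_sub, sub_eq_zero, mul_pow, ← map_pow, coeff_C_mul_X_pow] at hcoeff
  rw [hcoeff]
  by_cases hjk : j = k
  · simp [hjk]
  · simp [hjk, Ne.symm hjk]

theorem coeff_pscomp_of_X_pow_dvd (F : R⟦X⟧) {g : R⟦X⟧} {k : ℕ} (hk : 2 ≤ k)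
    (hg : X ^ k ∣ g - C (coeff 1 g) * X) :
    coeff k (pscomp F g) = coeff 1 F * coeff k g + coeff k F * coeff 1 g ^ k := by
  rw [coeff_pscomp, sum_eq_add 1 k (by omega)]
  · rw [pow_one, coeff_pow_of_X_pow_dvd (by omega) hg hk, if_pos rfl]
  · rintro (_ | _ | j) - ⟨h1, hjk⟩
    · simp [coeff_one, show k ≠ 0 by omega]
    · exact absurd rfl h1
    · rw [coeff_pow_of_X_pow_dvd (by omega) hg (by omega), if_neg hjk, mul_zero]
  · intro h
    exact absurd (mem_range.mpr (by omega)) h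
  · simp

theorem coeff_psiter_succ {f : R⟦X⟧} {k : ℕ} (hk : 2 ≤ k)
    (hf : X ^ k ∣ f - C (coeff 1 f) * X) (n : ℕ) :
    coeff k (psiter f (n + 1)) =
      coeff k f * coeff 1 f ^ n * ∑ i ∈ range (n + 1), coeff 1 f ^ ((k - 1) * i) := by
  have hf0 : constantCoeff f = 0 := by
    simpa using X_pow_dvd_iff.mp hf 0 (by omega)
  induction n with
  | zero => simp [psiter]
  | succ n ih =>
    rw [psiter_succ hf0, coeff_pscomp_of_X_pow_dvd _ hk hf, ih, coeff_one_psiter,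
      sum_range_succ' _ (n + 1)]
    obtain ⟨m, rfl⟩ : ∃ m, k = m + 1 := ⟨k - 1, by omega⟩
    simp only [Nat.add_sub_cancel, mul_add, mul_one, pow_add, pow_mul, ← sum_mul]
    ring

end

theorem cohen_lemma_general {K : Type*} [Field K] (a : ℕ → K) (h0 : a 0 = 0)
    (k n : ℕ) (hk : 2 ≤ k)
    (hzero : ∀ j, 2 ≤ j → j ≤ k - 1 → a j = 0) :
    PowerSeries.coeff k (psiter (PowerSeries.mk a) n) =
      a k * a 1 ^ (n - 1) * ∑ i ∈ Finset.range n, a 1 ^ ((k - 1) * i) := by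
  have hf : (X : K⟦X⟧) ^ k ∣ PowerSeries.mk a - C (coeff 1 (PowerSeries.mk a)) * X := by
    refine X_pow_dvd_iff.mpr fun m hm => ?_
    rcases m with _ | _ | m
    · simp [h0]
    · simp
    · simp [hzero (m + 2) (by omega) (by omega)]
  rcases n with _ | n
  · simp [psiter, coeff_X, show k ≠ 1 by omega]
  · simpa using coeff_psiter_succ hk hf n

/-- Cohen's Lemma (special-case consequence): if `a₁ ≠ 0` and `a_j = 0` for all
`2 ≤ j ≤ k−1`, then `f_k^(n) = a_k a₁^{n−1} ∑_{i=0}^{n−1} a₁^{(k−1)i}`. -/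
theorem cohen_lemma {K : Type*} [Field K] (a : ℕ → K) (h0 : a 0 = 0) (ha1 : a 1 ≠ 0)
    (k n : ℕ) (hk : 2 ≤ k) (hn : 1 ≤ n)
    (hzero : ∀ j, 2 ≤ j → j ≤ k - 1 → a j = 0) :
    PowerSeries.coeff k (psiter (PowerSeries.mk a) n) =
      a k * a 1 ^ (n - 1) * ∑ i ∈ Finset.range n, a 1 ^ ((k - 1) * i) :=
  cohen_lemma_general a h0 k n hk hzero
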